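/- arXiv:1602.02949 — 2 statements merged into one kernel-verified Lean document; each statement's English description precedes it below -/
import Mathlib

section
/- If G' is the cubic graph obtained from a cubic graph G by replacing every vertex with a triangle (the truncation), then the oddness of G' is at most the weak oddness of G: ω(G') ≤ ω_w(G). -/
open SimpleGraph

attribute [local instance] Classical.propDecidable

/-- A cubic graph: every vertex has degree 3. -/
noncomputable def IsCubic {V : Type*} [Fintype V] (G : SimpleGraph V) : Prop :=
  ∀ v, G.degree v = 3

/-- A bridgeless graph: no edge is a bridge. -/
def Bridgeless {V : Type*} (G : SimpleGraph V) : Prop :=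
  ∀ e ∈ G.edgeSet, ¬ G.IsBridge e

/-- The number of connected components with an odd number of vertices. -/
noncomputable def oddComponents {V : Type*} (H : SimpleGraph V) : ℕ :=
  Nat.card {c : H.ConnectedComponent // Odd (Nat.card c.supp)}

/-- A 2-factor of `G`: a spanning subgraph with all degrees 2. -/
noncomputable def IsTwoFactor {V : Type*} [Fintype V] (G H : SimpleGraph V) : Prop :=
  H ≤ G ∧ ∀ v, H.degree v = 2

/-- An even factor of `G`: a spanning subgraph with all degrees even. -/
noncomputable def IsEvenFactor {V : Type*} [Fintype V] (G H : SimpleGraph V) : Prop :=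
  H ≤ G ∧ ∀ v, Even (H.degree v)

/-- Oddness: least number of odd components (odd circuits) in a 2-factor. -/
noncomputable def oddness {V : Type*} [Fintype V] (G : SimpleGraph V) : ℕ :=
  sInf {n | ∃ H : SimpleGraph V, IsTwoFactor G H ∧ _root_.oddComponents H = n}

/-- Weak oddness: least number of odd components in an even factor. -/
noncomputable def weakOddness {V : Type*} [Fintype V] (G : SimpleGraph V) : ℕ :=
  sInf {n | ∃ H : SimpleGraph V, IsEvenFactor G H ∧ _root_.oddComponents H = n}

/-- A proper 3-edge-colouring exists. -/
def ThreeEdgeColourable {V : Type*} (G : SimpleGraph V) : Prop :=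
  ∃ f : Sym2 V → Fin 3, ∀ e₁ ∈ G.edgeSet, ∀ e₂ ∈ G.edgeSet,
    e₁ ≠ e₂ → (∃ v, v ∈ e₁ ∧ v ∈ e₂) → f e₁ ≠ f e₂

/-- Resistance (edge version): least number of edges whose deletion leaves a
3-edge-colourable graph. -/
noncomputable def eResistance {V : Type*} [Fintype V] (G : SimpleGraph V) : ℕ :=
  sInf {n | ∃ s : Set (Sym2 V), s ⊆ G.edgeSet ∧ Nat.card s = n ∧
    ThreeEdgeColourable (G.deleteEdges s)}

/-- Resistance (vertex version): least number of vertices whose deletion leaves a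
3-edge-colourable graph. -/
noncomputable def vResistance {V : Type*} [Fintype V] (G : SimpleGraph V) : ℕ :=
  sInf {n | ∃ s : Set V, Nat.card s = n ∧ ThreeEdgeColourable (G.induce sᶜ)}

/-- The truncation of `G`: every vertex replaced by a triangle (for cubic `G`). -/
def truncation {V : Type*} (G : SimpleGraph V) :
    SimpleGraph {p : V × V // G.Adj p.1 p.2} :=
  SimpleGraph.fromRel (fun x y =>
    x.1.1 = y.1.1 ∨ (x.1.1 = y.1.2 ∧ x.1.2 = y.1.1))

/-! An even factor `H` of a cubic graph has all degrees 0 or 2. Lift it to the truncation by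
keeping every edge `uv` of `H` as the edge between the corners `(u, v)` and `(v, u)`, and inside
the triangle of each vertex the sides that do not join two corners on edges of `H`: a vertex of
degree 2 becomes a path through its triangle, an isolated vertex the whole triangle, and every
corner gets degree 2. Two corners are connected in the lift iff their vertices are connected in
`H`, so a component of `H` with `n` vertices becomes a circuit with `3n` vertices, of the same
parity. -/

lemma Nat.card_preimage_of_card_fiber {V W : Type*} {π : W → V} {k : ℕ} (hk : k ≠ 0)
    (hfib : ∀ v, Nat.card {a // π a = v} = k) (s : Set V) :
    Nat.card (π ⁻¹' s) = Nat.card s * k := by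
  have : ∀ v, Finite {a // π a = v} := fun v => Nat.finite_of_card_ne_zero (hfib v ▸ hk)
  calc Nat.card (π ⁻¹' s)
      = Nat.card (Σ v : s, {a // π a = v}) :=
        Nat.card_congr (Equiv.sigmaSubtypeFiberEquivSubtype π fun _ => Iff.rfl).symm
    _ = Nat.card (s × Fin k) := Nat.card_congr <|
        (Equiv.sigmaCongrRight fun v : s => Finite.equivFinOfCardEq (hfib v)).trans
          (Equiv.sigmaEquivProd _ _)
    _ = Nat.card s * k := by rw [Nat.card_prod, Nat.card_fin]

namespace SimpleGraph

section ComponentsUnderProjection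

variable {V W : Type*} {F : SimpleGraph W} {H : SimpleGraph V} {π : W → V}

noncomputable def componentEquivOfReachableIff
    (hπ : ∀ a b, F.Reachable a b ↔ H.Reachable (π a) (π b)) (hsurj : Function.Surjective π) :
    F.ConnectedComponent ≃ H.ConnectedComponent where
  toFun := ConnectedComponent.lift (fun a => H.connectedComponentMk (π a))
    fun a b p _ => ConnectedComponent.sound ((hπ a b).1 ⟨p⟩)
  invFun := ConnectedComponent.lift (fun v => F.connectedComponentMk (Function.surjInv hsurj v))
    fun u v p _ => ConnectedComponent.sound <| (hπ _ _).2 <| by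
      simpa only [Function.surjInv_eq] using p.reachable
  left_inv := ConnectedComponent.ind fun a => ConnectedComponent.sound <| (hπ _ _).2 <| by
    rw [Function.surjInv_eq hsurj]
  right_inv := ConnectedComponent.ind fun v =>
    congrArg H.connectedComponentMk (Function.surjInv_eq hsurj v)

lemma mem_supp_componentEquivOfReachableIff
    (hπ : ∀ a b, F.Reachable a b ↔ H.Reachable (π a) (π b)) (hsurj : Function.Surjective π)
    (c : F.ConnectedComponent) (a : W) :
    a ∈ c.supp ↔ π a ∈ (componentEquivOfReachableIff hπ hsurj c).supp := by
  induction c using ConnectedComponent.ind with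
  | h b =>
    simp only [ConnectedComponent.mem_supp_iff, ConnectedComponent.eq]
    exact (hπ a b).trans ConnectedComponent.eq.symm

theorem oddComponents_eq_of_reachable_iff {k : ℕ} (hk : Odd k)
    (hfib : ∀ v, Nat.card {a // π a = v} = k)
    (hπ : ∀ a b, F.Reachable a b ↔ H.Reachable (π a) (π b)) :
    _root_.oddComponents F = _root_.oddComponents H := by
  have hsurj : Function.Surjective π := fun v =>
    have : Nonempty {a // π a = v} := Nat.card_pos_iff.1 (hfib v ▸ hk.pos) |>.1
    ⟨this.some, this.some.2⟩
  let e := componentEquivOfReachableIff hπ hsurj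
  have hcard (c : F.ConnectedComponent) : Nat.card c.supp = Nat.card (e c).supp * k := by
    rw [show c.supp = π ⁻¹' (e c).supp from
      Set.ext (mem_supp_componentEquivOfReachableIff hπ hsurj c)]
    exact Nat.card_preimage_of_card_fiber hk.pos.ne' hfib _
  exact Nat.card_congr <| e.subtypeEquiv fun c => by simp [hcard, Nat.odd_mul, hk]

end ComponentsUnderProjection

variable {V : Type*} {G H : SimpleGraph V} {u v : V}

lemma degree_eq_two_of_forall_adj_iff [Fintype (G.neighborSet v)] {a b : V} (hab : a ≠ b)
    (h : ∀ w, G.Adj v w ↔ w = a ∨ w = b) : G.degree v = 2 := by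
  rw [← card_neighborFinset_eq_degree, show G.neighborFinset v = {a, b} by ext; simp [h],
    Finset.card_pair hab]

lemma existsUnique_not_adj_of_even_degree [Fintype V] (hG : G.degree u = 3) (hle : H ≤ G)
    (hev : Even (H.degree u)) (huv : H.Adj u v) :
    ∃! x, G.Adj u x ∧ ¬ H.Adj u x := by
  have hsub : H.neighborFinset u ⊆ G.neighborFinset u := fun w => by
    simpa only [mem_neighborFinset] using @hle u w
  have hpos : 0 < H.degree u := H.degree_pos_iff_exists_adj u |>.2 ⟨v, huv⟩
  have hH : H.degree u = 2 := by
    have := Finset.card_le_card hsub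
    rw [card_neighborFinset_eq_degree, card_neighborFinset_eq_degree] at this
    obtain ⟨k, hk⟩ := hev
    omega
  obtain ⟨x, hx⟩ : ∃ x, G.neighborFinset u \ H.neighborFinset u = {x} := by
    rw [← Finset.card_eq_one, Finset.card_sdiff_of_subset hsub, card_neighborFinset_eq_degree,
      card_neighborFinset_eq_degree, hG, hH]
  rw [Finset.eq_singleton_iff_unique_mem] at hx
  simp only [Finset.mem_sdiff, mem_neighborFinset] at hx
  exact ⟨x, hx⟩

end SimpleGraph

section TruncationFactor

variable {V : Type*} {G H : SimpleGraph V}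

/-- The vertex `⟨(u, v), _⟩` of the truncation is the corner of the triangle of `u` on the edge
`uv`. -/
def truncationFactor (G H : SimpleGraph V) : SimpleGraph {p : V × V // G.Adj p.1 p.2} where
  Adj a b := a ≠ b ∧ ((a.1.1 = b.1.2 ∧ a.1.2 = b.1.1 ∧ H.Adj a.1.1 a.1.2) ∨
    (a.1.1 = b.1.1 ∧ ¬ (H.Adj a.1.1 a.1.2 ∧ H.Adj b.1.1 b.1.2)))
  symm := ⟨by
    rintro a b ⟨hne, ⟨h₁, h₂, h₃⟩ | ⟨h₁, h₂⟩⟩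
    · exact ⟨hne.symm, Or.inl ⟨h₂.symm, h₁.symm, h₁ ▸ h₂ ▸ h₃.symm⟩⟩
    · exact ⟨hne.symm, Or.inr ⟨h₁.symm, fun h => h₂ h.symm⟩⟩⟩
  loopless := ⟨fun _ h => h.1 rfl⟩

@[simp]
lemma truncationFactor_adj {a b : {p : V × V // G.Adj p.1 p.2}} :
    (truncationFactor G H).Adj a b ↔ a ≠ b ∧ ((a.1.1 = b.1.2 ∧ a.1.2 = b.1.1 ∧ H.Adj a.1.1 a.1.2) ∨
      (a.1.1 = b.1.1 ∧ ¬ (H.Adj a.1.1 a.1.2 ∧ H.Adj b.1.1 b.1.2))) :=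
  Iff.rfl

lemma truncationFactor_le : truncationFactor G H ≤ truncation G := by
  intro a b hab
  obtain ⟨hne, ⟨h₁, h₂, -⟩ | ⟨h₁, -⟩⟩ := truncationFactor_adj.1 hab
  · exact (fromRel_adj _ a b).2 ⟨hne, Or.inl (Or.inr ⟨h₁, h₂⟩)⟩
  · exact (fromRel_adj _ a b).2 ⟨hne, Or.inl (Or.inl h₁)⟩

lemma truncationFactor_adj_swap (hle : H ≤ G) {u v : V} (h : H.Adj u v) :
    (truncationFactor G H).Adj ⟨(u, v), hle h⟩ ⟨(v, u), hle h.symm⟩ :=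
  truncationFactor_adj.2 ⟨fun he => h.ne (congrArg (·.1.1) he), Or.inl ⟨rfl, rfl, h⟩⟩

variable [Fintype V]

lemma truncationFactor_degree (hc : IsCubic G) (hH : IsEvenFactor G H)
    (a : {p : V × V // G.Adj p.1 p.2}) : (truncationFactor G H).degree a = 2 := by
  obtain ⟨⟨u, v⟩, huv⟩ := a
  by_cases huvH : H.Adj u v
  · obtain ⟨x, ⟨hx, hxH⟩, hxu⟩ :=
      existsUnique_not_adj_of_even_degree (hc u) hH.1 (hH.2 u) huvH
    refine degree_eq_two_of_forall_adj_iff (a := ⟨(v, u), huv.symm⟩) (b := ⟨(u, x), hx⟩)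
      (fun he => huv.ne' (congrArg (·.1.1) he)) fun ⟨⟨p, q⟩, hpq⟩ => ?_
    simp only [truncationFactor_adj, ne_eq, Subtype.mk.injEq, Prod.mk.injEq, huvH, true_and,
      and_true]
    constructor
    · rintro ⟨-, ⟨rfl, rfl⟩ | ⟨rfl, hq⟩⟩
      · exact Or.inl ⟨rfl, rfl⟩
      · exact Or.inr ⟨rfl, hxu q ⟨hpq, hq⟩⟩
    · rintro (⟨rfl, rfl⟩ | ⟨rfl, rfl⟩)
      · exact ⟨fun h => huv.ne h.1, Or.inl ⟨rfl, rfl⟩⟩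
      · exact ⟨fun h => hxH (h.2 ▸ huvH), Or.inr ⟨rfl, hxH⟩⟩
  · obtain ⟨w₁, w₂, hw, hN⟩ : ∃ w₁ w₂, w₁ ≠ w₂ ∧ (G.neighborFinset u).erase v = {w₁, w₂} := by
      rw [← Finset.card_eq_two, Finset.card_erase_of_mem ((mem_neighborFinset _ _ _).2 huv),
        card_neighborFinset_eq_degree, hc u]
    have hw₁ : G.Adj u w₁ :=
      (mem_neighborFinset _ _ _).1 (Finset.mem_of_mem_erase (hN ▸ Finset.mem_insert_self _ _))
    have hw₂ : G.Adj u w₂ := (mem_neighborFinset _ _ _).1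
      (Finset.mem_of_mem_erase (hN ▸ Finset.mem_insert_of_mem (Finset.mem_singleton_self _)))
    refine degree_eq_two_of_forall_adj_iff (a := ⟨(u, w₁), hw₁⟩) (b := ⟨(u, w₂), hw₂⟩)
      (fun he => hw (congrArg (·.1.2) he)) fun ⟨⟨p, q⟩, hpq⟩ => ?_
    have hq := Finset.ext_iff.1 hN q
    simp only [Finset.mem_erase, mem_neighborFinset, Finset.mem_insert,
      Finset.mem_singleton] at hq
    simp only [truncationFactor_adj, ne_eq, Subtype.mk.injEq, Prod.mk.injEq, huvH, false_and,
      and_false, false_or, not_false_eq_true, and_true]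
    grind

lemma truncationFactor_reachable_of_fst_eq (hc : IsCubic G) (hH : IsEvenFactor G H)
    {a b : {p : V × V // G.Adj p.1 p.2}} (hab : a.1.1 = b.1.1) :
    (truncationFactor G H).Reachable a b := by
  obtain ⟨⟨u, v⟩, huv⟩ := a
  obtain ⟨⟨u', w⟩, huw⟩ := b
  obtain rfl : u = u' := hab
  by_cases hvw : v = w
  · subst hvw; rfl
  have hne : ∀ {x y} (hx : G.Adj u x) (hy : G.Adj u y), x ≠ y →
      (⟨(u, x), hx⟩ : {p : V × V // G.Adj p.1 p.2}) ≠ ⟨(u, y), hy⟩ :=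
    fun _ _ hxy he => hxy (congrArg (·.1.2) he)
  by_cases hboth : H.Adj u v ∧ H.Adj u w
  · -- both corners lie on edges of `H`: pass through the third corner
    obtain ⟨x, ⟨hx, hxH⟩, -⟩ := existsUnique_not_adj_of_even_degree (hc u) hH.1 (hH.2 u) hboth.1
    have h₁ : (truncationFactor G H).Adj ⟨(u, v), huv⟩ ⟨(u, x), hx⟩ :=
      truncationFactor_adj.2 ⟨hne _ _ fun h => hxH (h ▸ hboth.1), Or.inr ⟨rfl, fun h => hxH h.2⟩⟩
    have h₂ : (truncationFactor G H).Adj ⟨(u, x), hx⟩ ⟨(u, w), huw⟩ :=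
      truncationFactor_adj.2 ⟨hne _ _ fun h => hxH (h ▸ hboth.2), Or.inr ⟨rfl, fun h => hxH h.1⟩⟩
    exact h₁.reachable.trans h₂.reachable
  · exact (truncationFactor_adj.2 ⟨hne _ _ hvw, Or.inr ⟨rfl, hboth⟩⟩).reachable

lemma truncationFactor_reachable_iff (hc : IsCubic G) (hH : IsEvenFactor G H)
    (a b : {p : V × V // G.Adj p.1 p.2}) :
    (truncationFactor G H).Reachable a b ↔ H.Reachable a.1.1 b.1.1 := by
  refine ⟨fun h => ?_, fun h => ?_⟩
  · rw [reachable_iff_reflTransGen] at h ⊢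
    refine h.lift' (·.1.1) fun a b hab => ?_
    show Relation.ReflTransGen H.Adj a.1.1 b.1.1
    obtain ⟨-, ⟨-, h₂, h₃⟩ | ⟨h₁, -⟩⟩ := truncationFactor_adj.1 hab
    · exact .single (h₂ ▸ h₃)
    · rw [h₁]
  · suffices ∀ w, Relation.ReflTransGen H.Adj a.1.1 w → ∀ b : {p : V × V // G.Adj p.1 p.2},
        b.1.1 = w → (truncationFactor G H).Reachable a b from
      this _ ((reachable_iff_reflTransGen _ _).1 h) b rfl
    intro w hw
    induction hw with
    | refl => exact fun b hb => truncationFactor_reachable_of_fst_eq hc hH hb.symm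
    | @tail y z _ hyz ih =>
      exact fun b hb =>
        ((ih ⟨(y, z), hH.1 hyz⟩ rfl).trans (truncationFactor_adj_swap hH.1 hyz).reachable).trans
          (truncationFactor_reachable_of_fst_eq hc hH hb.symm)

lemma IsCubic.card_fiber_fst (hc : IsCubic G) (v : V) :
    Nat.card {a : {p : V × V // G.Adj p.1 p.2} // a.1.1 = v} = 3 := by
  rw [← hc v, ← card_neighborSet_eq_degree, ← Nat.card_eq_fintype_card]
  exact Nat.card_congr
    { toFun := fun a => ⟨a.1.1.2, by simpa [← a.2] using a.1.2⟩
      invFun := fun w => ⟨⟨(v, w), w.2⟩, rfl⟩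
      left_inv := by rintro ⟨⟨⟨u, w⟩, h⟩, rfl⟩; rfl
      right_inv := fun _ => rfl }

end TruncationFactor

/-- The oddness of the truncation of a cubic graph `G` is at most the weak
oddness of `G`. -/
theorem stmt9 {V : Type*} [Fintype V] (G : SimpleGraph V) (hc : IsCubic G) :
    oddness (truncation G) ≤ weakOddness G := by
  obtain ⟨H, hH, hodd⟩ : weakOddness G ∈
      {n | ∃ H : SimpleGraph V, IsEvenFactor G H ∧ _root_.oddComponents H = n} :=
    Nat.sInf_mem ⟨_, ⊥, ⟨bot_le, fun v => by simp⟩, rfl⟩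
  refine Nat.sInf_le
    ⟨truncationFactor G H, ⟨truncationFactor_le, truncationFactor_degree hc hH⟩, ?_⟩
  rw [← hodd]
  exact oddComponents_eq_of_reachable_iff (by decide) hc.card_fiber_fst
    (truncationFactor_reachable_iff hc hH)
end

section
/- Let P be the 2-pole obtained from the Petersen graph by subdividing an edge with a new vertex and splitting that vertex off. Then removing from P a suitable non-terminal vertex (one at distance 3 from both terminals) leaves a graph admitting a proper 3-edge-colouring in which the two terminal edges receive different colours. -/
/-! The vertex `{0, 2}` works: the walks `{0,2} – {3,4} – {0,1} – t₀` and
`{0,2} – {1,4} – {2,3} – t₁` have length 3, and no shorter ones exist. After deleting `{0, 2}`,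
the 2-pole has a 3-edge-colouring giving its two terminal edges different colours.
Properness of an edge colouring is a condition at each vertex, so an explicit colouring is
verified by a finite check. -/

open SimpleGraph

attribute [local instance] Classical.propDecidable

/-- The Petersen graph as the Kneser graph K(5,2). -/
def petersen : SimpleGraph {s : Finset (Fin 5) // s.card = 2} :=
  SimpleGraph.fromRel (fun a b => Disjoint a.1 b.1)

/-- The vertex `{0,1}` of the Petersen graph. -/
def pX : {s : Finset (Fin 5) // s.card = 2} := ⟨{0, 1}, by decide⟩

/-- The vertex `{2,3}` of the Petersen graph, adjacent to `pX`. -/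
def pY : {s : Finset (Fin 5) // s.card = 2} := ⟨{2, 3}, by decide⟩

/-- The 2-pole `P`: the Petersen graph with the edge `pX pY` subdivided by a
new vertex which is then split off into the two terminals `inr 0`, `inr 1`. -/
def pole : SimpleGraph ({s : Finset (Fin 5) // s.card = 2} ⊕ Fin 2) :=
  SimpleGraph.fromRel (fun a b =>
    match a, b with
    | .inl u, .inl v =>
        Disjoint u.1 v.1 ∧ ¬((u = pX ∧ v = pY) ∨ (u = pY ∧ v = pX))
    | .inl u, .inr i => (i = 0 ∧ u = pX) ∨ (i = 1 ∧ u = pY)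
    | .inr _, .inl _ => False
    | .inr _, .inr _ => False)

namespace SimpleGraph

variable {V : Type*} {G : SimpleGraph V} {u v : V}

lemma dist_eq_of_length_eq_of_lt_edist (p : G.Walk u v) {n : ℕ} (hp : p.length = n + 1)
    (h : n < G.edist u v) : G.dist u v = n + 1 := by
  have hedist : G.edist u v = (n + 1 : ℕ) :=
    le_antisymm (hp ▸ p.edist_le) (by exact_mod_cast Order.add_one_le_of_lt h)
  exact_mod_cast p.reachable.coe_dist_eq_edist.trans hedist

lemma dist_eq_three_of_walk (p : G.Walk u v) (hp : p.length = 3) (hne : u ≠ v)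
    (hadj : ¬G.Adj u v) (hcommon : ∀ w, ¬(G.Adj u w ∧ G.Adj w v)) : G.dist u v = 3 := by
  refine dist_eq_of_length_eq_of_lt_edist p hp (two_lt_edist_iff.2 ⟨hne, hadj, ?_⟩)
  ext w
  simpa [mem_commonNeighbors, G.adj_comm w v] using hcommon w

lemma colouring_ne_of_forall_adj {α : Type*} (f : Sym2 V → α) (u : V)
    (h : ∀ v w₁ w₂, G.Adj v w₁ → G.Adj v w₂ → w₁ ≠ w₂ → u ≠ v → u ≠ w₁ → u ≠ w₂ →
      f s(v, w₁) ≠ f s(v, w₂)) :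
    ∀ e₁ ∈ G.edgeSet, u ∉ e₁ → ∀ e₂ ∈ G.edgeSet, u ∉ e₂ →
      e₁ ≠ e₂ → (∃ w, w ∈ e₁ ∧ w ∈ e₂) → f e₁ ≠ f e₂ := by
  rintro e₁ he₁ hu₁ e₂ he₂ hu₂ hne ⟨v, hv₁, hv₂⟩
  obtain ⟨w₁, rfl⟩ := Sym2.mem_iff_exists.1 hv₁
  obtain ⟨w₂, rfl⟩ := Sym2.mem_iff_exists.1 hv₂
  simp only [Sym2.mem_iff, not_or] at hu₁ hu₂
  exact h v w₁ w₂ he₁ he₂ (fun hw => hne (hw ▸ rfl)) hu₁.1 hu₁.2 hu₂.2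

end SimpleGraph

abbrev PoleVertex := {s : Finset (Fin 5) // s.card = 2} ⊕ Fin 2

instance : DecidableRel pole.Adj := fun a b => by
  cases a <;> cases b <;> exact decidable_of_iff' _ (fromRel_adj _ _ _)

-- Outranks the ambient `Classical.propDecidable`, which would block `decide`.
instance (priority := high) : DecidableEq PoleVertex := instDecidableEqSum

def pair (a b : Fin 5) (h : a ≠ b := by decide) : PoleVertex :=
  .inl ⟨{a, b}, Finset.card_pair h⟩

-- Colour classes 1 and 2 of `pole` minus `pair 0 2`; every other edge gets colour 0.
def colourOne : Finset (Sym2 PoleVertex) :=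
  {s(pair 2 3, .inr 1), s(pair 0 1, pair 2 4), s(pair 0 3, pair 1 4), s(pair 0 4, pair 1 3),
    s(pair 1 2, pair 3 4)}

def colourTwo : Finset (Sym2 PoleVertex) :=
  {s(pair 0 1, pair 3 4), s(pair 0 3, pair 2 4), s(pair 0 4, pair 1 2), s(pair 1 4, pair 2 3)}

def colouring (e : Sym2 PoleVertex) : Fin 3 :=
  if e ∈ colourOne then 1 else if e ∈ colourTwo then 2 else 0

/-- Removing from `P` a suitable non-terminal vertex at distance 3 from both
terminals leaves a graph with a proper 3-edge-colouring in which the two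
terminal edges get different colours. -/
theorem stmt14 :
    ∃ u : {s : Finset (Fin 5) // s.card = 2} ⊕ Fin 2,
      (∀ i : Fin 2, u ≠ .inr i) ∧
      pole.dist u (.inr 0) = 3 ∧ pole.dist u (.inr 1) = 3 ∧
      ∃ f : Sym2 ({s : Finset (Fin 5) // s.card = 2} ⊕ Fin 2) → Fin 3,
        (∀ e₁ ∈ pole.edgeSet, u ∉ e₁ → ∀ e₂ ∈ pole.edgeSet, u ∉ e₂ →
          e₁ ≠ e₂ → (∃ w, w ∈ e₁ ∧ w ∈ e₂) → f e₁ ≠ f e₂) ∧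
        f s(.inl pX, .inr 0) ≠ f s(.inl pY, .inr 1) := by
  refine ⟨pair 0 2, fun _ => Sum.inl_ne_inr, ?_, ?_, colouring, ?_, by decide⟩
  · refine dist_eq_three_of_walk (.cons (v := pair 3 4) (by decide) <|
      .cons (v := pair 0 1) (by decide) <| .cons (by decide) .nil) rfl ?_ ?_ ?_ <;> decide
  · refine dist_eq_three_of_walk (.cons (v := pair 1 4) (by decide) <|
      .cons (v := pair 2 3) (by decide) <| .cons (by decide) .nil) rfl ?_ ?_ ?_ <;> decide
  · exact colouring_ne_of_forall_adj colouring _ (by decide)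
end
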